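/- (Theorem 9: best achievable exponent of the Bayes payoff.) Let A be a nonempty finite set, d : A × A → ℝ nonnegative with d(a,a) = 0 for all a, and let P_0, P_1 be strictly positive PMFs on A and Δ_0, Δ_1 ≥ 0. For a ≥ 0 define g(a) = min over all PMFs P_Y on A of max{ D̃_{Δ_1}(P_Y, P_1), D̃_{Δ_0}(P_Y, P_0) − a }. Then g(a) → g(0) as a → 0 from the right, where g(0) = min over all PMFs P_Y on A of max{ D̃_{Δ_1}(P_Y, P_1), D̃_{Δ_0}(P_Y, P_0) }. -/

import Mathlib

open scoped Classical
open Finset Filter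

noncomputable section

/-- A probability mass function on a finite alphabet, as a real-valued function. -/
def IsPMF {A : Type} [Fintype A] (P : A → ℝ) : Prop :=
  (∀ a, 0 ≤ P a) ∧ ∑ a, P a = 1

/-- Kullback--Leibler divergence `D(Q‖P) = ∑_{a : Q a > 0} Q a · ln (Q a / P a)`. -/
def klDiv {A : Type} [Fintype A] (Q P : A → ℝ) : ℝ :=
  ∑ a, if 0 < Q a then Q a * Real.log (Q a / P a) else 0

/-- First marginal of a joint PMF on `A × A`. -/
def margX {A : Type} [Fintype A] (Q : A × A → ℝ) : A → ℝ := fun a => ∑ b, Q (a, b)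

/-- Second marginal of a joint PMF on `A × A`. -/
def margY {A : Type} [Fintype A] (Q : A × A → ℝ) : A → ℝ := fun b => ∑ a, Q (a, b)

/-- Expected distortion of a joint PMF. -/
def expDist {A : Type} [Fintype A] (d : A → A → ℝ) (Q : A × A → ℝ) : ℝ :=
  ∑ q : A × A, Q q * d q.1 q.2

/-- Generalized divergence `D̃_Δ(P_Y, P)`: minimum of `D(Q_X‖P)` over joint PMFs `Q`
with second marginal `P_Y` and expected distortion at most `Δ`. -/
def Dtilde {A : Type} [Fintype A] (d : A → A → ℝ) (Δ : ℝ) (PY P : A → ℝ) : ℝ :=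
  sInf {v | ∃ Q : A × A → ℝ,
    IsPMF Q ∧ margY Q = PY ∧ expDist d Q ≤ Δ ∧ v = klDiv (margX Q) P}

/-- Earth mover distance between two PMFs. -/
def EMD {A : Type} [Fintype A] (d : A → A → ℝ) (P P' : A → ℝ) : ℝ :=
  sInf {v | ∃ R : A × A → ℝ,
    IsPMF R ∧ margX R = P ∧ margY R = P' ∧ v = expDist d R}

/-- Memoryless (product) probability of a sequence. -/
def seqProb {A : Type} {n : ℕ} (P : A → ℝ) (x : Fin n → A) : ℝ := ∏ i, P (x i)

/-- Additive extension of a per-letter distortion to sequences. -/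
def dSeq {A : Type} {n : ℕ} (d : A → A → ℝ) (x y : Fin n → A) : ℝ := ∑ i, d (x i) (y i)

/-- Empirical PMF (type) of a sequence. -/
def empP {A : Type} [Fintype A] [DecidableEq A] {n : ℕ} (x : Fin n → A) : A → ℝ :=
  fun a => ((univ.filter fun i => x i = a).card : ℝ) / (n : ℝ)

/-- Empirical entropy of a sequence. -/
def empEnt {A : Type} [Fintype A] [DecidableEq A] {n : ℕ} (y : Fin n → A) : ℝ :=
  -∑ a, if 0 < empP y a then empP y a * Real.log (empP y a) else 0

/-- Conditional type class `T(y|x)`. -/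
def condTypeClass {A : Type} [Fintype A] [DecidableEq A] {n : ℕ} (x y : Fin n → A) :
    Finset (Fin n → A) :=
  univ.filter fun y' => ∀ a b : A,
    (univ.filter fun i => x i = a ∧ y' i = b).card
      = (univ.filter fun i => x i = a ∧ y i = b).card

/-- Number of distinct conditional type classes `T(y|x)` arising from `y` with
`dn x y ≤ n·Δ`. -/
def numCondTypes {A : Type} [Fintype A] [DecidableEq A] {n : ℕ}
    (dn : (Fin n → A) → (Fin n → A) → ℝ) (Δ : ℝ) (x : Fin n → A) : ℕ :=
  ((univ.filter fun y => dn x y ≤ (n : ℝ) * Δ).image fun y => condTypeClass x y).card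

/-- The optimal attack channel `A*_Δ(y|x) = c_n(x)/|T(y|x)|` on admissible `y`,
and `0` otherwise; here `c_n(x)` is the reciprocal of the number of admissible
conditional type classes. -/
def Astar {A : Type} [Fintype A] [DecidableEq A] {n : ℕ}
    (dn : (Fin n → A) → (Fin n → A) → ℝ) (Δ : ℝ) (x y : Fin n → A) : ℝ :=
  if dn x y ≤ (n : ℝ) * Δ then
    ((numCondTypes dn Δ x : ℝ))⁻¹ / ((condTypeClass x y).card : ℝ)
  else 0

/-- A channel on `A^n`: `W x y` is the conditional probability of output `y` given input `x`. -/
def IsChannel {A : Type} [Fintype A] {n : ℕ}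
    (W : (Fin n → A) → (Fin n → A) → ℝ) : Prop :=
  (∀ x y, 0 ≤ W x y) ∧ ∀ x, ∑ y, W x y = 1

/-- The class `C_Δ` of admissible channels: those assigning zero probability to any
`y` with `dn x y > n·Δ`. -/
def InC {A : Type} [Fintype A] {n : ℕ}
    (dn : (Fin n → A) → (Fin n → A) → ℝ) (Δ : ℝ)
    (W : (Fin n → A) → (Fin n → A) → ℝ) : Prop :=
  IsChannel W ∧ ∀ x y, (n : ℝ) * Δ < dn x y → W x y = 0

/-- False positive probability: `Φ y` is the probability of deciding `H₁` given `y`. -/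
def PFP {A : Type} [Fintype A] {n : ℕ} (P0 : A → ℝ) (Φ : (Fin n → A) → ℝ)
    (A0 : (Fin n → A) → (Fin n → A) → ℝ) : ℝ :=
  ∑ x, ∑ y, seqProb P0 x * A0 x y * Φ y

/-- False negative probability. -/
def PFN {A : Type} [Fintype A] {n : ℕ} (P1 : A → ℝ) (Φ : (Fin n → A) → ℝ)
    (A1 : (Fin n → A) → (Fin n → A) → ℝ) : ℝ :=
  ∑ x, ∑ y, seqProb P1 x * A1 x y * (1 - Φ y)

/-- Sequence-level generalized divergence
`D̃ⁿ_Δ(y,P) = min_{x : d(x,y) ≤ nΔ} D(P̂_x‖P)`. -/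
def DtildeN {A : Type} [Fintype A] [DecidableEq A] {n : ℕ} (d : A → A → ℝ) (Δ : ℝ)
    (y : Fin n → A) (P : A → ℝ) : ℝ :=
  sInf {v | ∃ x : Fin n → A, dSeq d x y ≤ (n : ℝ) * Δ ∧ v = klDiv (empP x) P}


/-!
Gibbs' inequality makes `D̃_Δ(P_Y, P₁)` nonnegative. Hence, for each `P_Y`, the map
`a ↦ max (D̃_{Δ₁}(P_Y, P₁)) (D̃_{Δ₀}(P_Y, P₀) - a)` is a 1-Lipschitz function bounded below by `0`,
and an infimum of such functions is again 1-Lipschitz. So `g` is continuous.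
-/

section PMF

variable {A : Type} [Fintype A]

theorem isPMF_pi_single [DecidableEq A] (a : A) : IsPMF (Pi.single a 1 : A → ℝ) :=
  ⟨(Pi.single_nonneg.mpr zero_le_one : (0 : A → ℝ) ≤ Pi.single a 1), by simp⟩

theorem sum_sub_sum_le_klDiv {Q P : A → ℝ} (hP : ∀ a, 0 < P a) :
    ∑ a, Q a - ∑ a, P a ≤ klDiv Q P := by
  rw [← Finset.sum_sub_distrib]
  refine Finset.sum_le_sum fun a _ => ?_
  split_ifs with hQ
  · have hlog := Real.one_sub_inv_le_log_of_pos (div_pos hQ (hP a))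
    rw [inv_div] at hlog
    calc Q a - P a = Q a * (1 - P a / Q a) := by field_simp
      _ ≤ Q a * Real.log (Q a / P a) := by gcongr
  · linarith [hP a]

theorem klDiv_nonneg {Q P : A → ℝ} (hP : ∀ a, 0 < P a) (hsum : ∑ a, Q a = ∑ a, P a) :
    0 ≤ klDiv Q P := by
  simpa only [hsum, sub_self] using sum_sub_sum_le_klDiv (Q := Q) hP

theorem sum_margX (Q : A × A → ℝ) : ∑ a, margX Q a = ∑ q, Q q :=
  (Fintype.sum_prod_type Q).symm

theorem Dtilde_nonneg (d : A → A → ℝ) (Δ : ℝ) (PY : A → ℝ) {P : A → ℝ} (hP : IsPMF P)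
    (hPpos : ∀ a, 0 < P a) : 0 ≤ Dtilde d Δ PY P := by
  refine Real.sInf_nonneg ?_
  rintro _ ⟨Q, hQ, -, -, rfl⟩
  exact klDiv_nonneg hPpos (by rw [sum_margX, hQ.2, hP.2])

end PMF

section Lipschitz

variable {α ι : Type*} [PseudoMetricSpace α]

theorem LipschitzWith.sInf_setOf {K : NNReal} {p : ι → Prop} {F : ι → α → ℝ} (hp : ∃ i, p i)
    (hbdd : ∀ x, BddBelow {v | ∃ i, p i ∧ v = F i x}) (hF : ∀ i, LipschitzWith K (F i)) :
    LipschitzWith K fun x => sInf {v | ∃ i, p i ∧ v = F i x} := by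
  refine LipschitzWith.of_le_add_mul K fun x y => ?_
  obtain ⟨i₀, hi₀⟩ := hp
  rw [← sub_le_iff_le_add]
  refine le_csInf ⟨_, i₀, hi₀, rfl⟩ ?_
  rintro _ ⟨i, hi, rfl⟩
  rw [sub_le_iff_le_add]
  exact (csInf_le (hbdd x) ⟨i, hi, rfl⟩).trans ((hF i).le_add_mul x y)

theorem lipschitzWith_max_sub (c e : ℝ) : LipschitzWith 1 fun a : ℝ => max c (e - a) :=
  LipschitzWith.of_le_add fun a b => by
    rw [Real.dist_eq]
    exact max_le (by linarith [le_max_left c (e - b), abs_nonneg (a - b)])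
      (by linarith [le_max_right c (e - b), neg_abs_le (a - b)])

end Lipschitz

theorem best_bayes_exponent_general
    {A : Type} [Fintype A] [Nonempty A]
    (d : A → A → ℝ)
    (P0 P1 : A → ℝ) (hP1 : IsPMF P1)
    (hP1pos : ∀ a, 0 < P1 a)
    (Δ0 Δ1 : ℝ) :
    Tendsto
      (fun a : ℝ => sInf {v | ∃ PY : A → ℝ, IsPMF PY ∧
        v = max (Dtilde d Δ1 PY P1) (Dtilde d Δ0 PY P0 - a)})
      (nhdsWithin 0 (Set.Ioi 0))
      (nhds (sInf {v | ∃ PY : A → ℝ, IsPMF PY ∧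
        v = max (Dtilde d Δ1 PY P1) (Dtilde d Δ0 PY P0)})) := by
  have hbdd : ∀ a : ℝ, BddBelow {v | ∃ PY : A → ℝ, IsPMF PY ∧
      v = max (Dtilde d Δ1 PY P1) (Dtilde d Δ0 PY P0 - a)} := by
    refine fun a => ⟨0, ?_⟩
    rintro _ ⟨PY, -, rfl⟩
    exact (Dtilde_nonneg d Δ1 PY hP1 hP1pos).trans (le_max_left _ _)
  have hg := LipschitzWith.sInf_setOf ⟨_, isPMF_pi_single (Classical.arbitrary A)⟩ hbdd
    fun PY => lipschitzWith_max_sub (Dtilde d Δ1 PY P1) (Dtilde d Δ0 PY P0)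
  simpa only [sub_zero] using (hg.continuous.tendsto 0).mono_left nhdsWithin_le_nhds

/-- Theorem 9: best achievable exponent of the Bayes payoff. -/
theorem best_bayes_exponent
    {A : Type} [Fintype A] [Nonempty A]
    (d : A → A → ℝ) (hd : ∀ a b, 0 ≤ d a b) (hdrefl : ∀ a, d a a = 0)
    (P0 P1 : A → ℝ) (hP0 : IsPMF P0) (hP1 : IsPMF P1)
    (hP0pos : ∀ a, 0 < P0 a) (hP1pos : ∀ a, 0 < P1 a)
    (Δ0 Δ1 : ℝ) (hΔ0 : 0 ≤ Δ0) (hΔ1 : 0 ≤ Δ1) :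
    Tendsto
      (fun a : ℝ => sInf {v | ∃ PY : A → ℝ, IsPMF PY ∧
        v = max (Dtilde d Δ1 PY P1) (Dtilde d Δ0 PY P0 - a)})
      (nhdsWithin 0 (Set.Ioi 0))
      (nhds (sInf {v | ∃ PY : A → ℝ, IsPMF PY ∧
        v = max (Dtilde d Δ1 PY P1) (Dtilde d Δ0 PY P0)})) :=
  best_bayes_exponent_general d P0 P1 hP1 hP1pos Δ0 Δ1
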